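/- arXiv:2603.21992 — 4 statements merged into one kernel-verified Lean document; each statement's English description precedes it below -/
import Mathlib

section
/- Let $X \sim$ Exponential($\gamma_j$) with $\gamma_j > 0$, fix $r_j, r_k, i_k$ with $i_k < r_k < r_j$, and set $i_j = r_j - X$. Then $\mathbb{E}[\min(r_k, i_j) - \min(i_j, i_k)\;;\; i_j > i_k]$, i.e. $\mathbb{E}[(\min(r_k,i_j) - i_k)\mathbf{1}\{i_j > i_k\}]$, equals $e^{-\gamma_j(r_j - r_k)} \cdot \gamma_j^{-1}\big(e^{-\gamma_j(r_k - i_k)} - \gamma_j i_k + \gamma_j r_k - 1\big) + (1 - e^{-\gamma_j(r_j - r_k)})(r_k - i_k)$. -/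
open MeasureTheory ProbabilityTheory Real Set
open scoped ENNReal NNReal

lemma hasDerivAt_exp_neg_mul (γ x : ℝ) :
    HasDerivAt (fun y => exp (-(γ * y))) (-γ * exp (-(γ * x))) x := by
  have h := (((hasDerivAt_id x).const_mul (-γ)).exp)
  simpa [neg_mul, mul_comm] using h

/-- Lemma 4 of the paper (case `i_k < r_k < r_j`): with `i_j = r_j - X`,
`X ~ Exp(γ_j)`, the expected infective time pressure
`E[(min(r_k, i_j) - i_k) 1{i_j > i_k}]` equals
`e^{-γ_j(r_j - r_k)} γ_j⁻¹ (e^{-γ_j(r_k - i_k)} - γ_j i_k + γ_j r_k - 1)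
  + (1 - e^{-γ_j(r_j - r_k)})(r_k - i_k)`. -/
theorem expected_pressure_ik_lt_rk_lt_rj
    (γj rj rk ik : ℝ) (hγ : 0 < γj) (h1 : ik < rk) (h2 : rk < rj) :
    ∫ x, (if ik < rj - x then min rk (rj - x) - ik else 0) ∂(expMeasure γj)
      = exp (-γj * (rj - rk))
          * (γj⁻¹ * (exp (-γj * (rk - ik)) - γj * ik + γj * rk - 1))
        + (1 - exp (-γj * (rj - rk))) * (rk - ik) := by
  have hγ' : γj ≠ 0 := ne_of_gt hγ
  set a := rj - rk with ha_def
  set b := rj - ik with hb_def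
  have ha : (0:ℝ) < a := by simp [ha_def]; linarith
  have hb : (0:ℝ) < b := by simp [hb_def]; linarith
  have hab : a < b := by simp [ha_def, hb_def]; linarith
  -- pdf formula
  have pdf_eq : ∀ x, exponentialPDFReal γj x
      = if 0 ≤ x then γj * exp (-(γj * x)) else 0 := by
    intro x
    rw [exponentialPDFReal, gammaPDFReal]
    simp
  have pdf_nonneg := exponentialPDFReal_nonneg hγ
  -- rewrite measure as withDensity
  have hdens : expMeasure γj
      = volume.withDensity fun x => ((exponentialPDFReal γj x).toNNReal : ℝ≥0∞) := by
    rw [expMeasure, gammaMeasure]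
    rfl
  have hmeas : Measurable fun x => (exponentialPDFReal γj x).toNNReal :=
    (measurable_exponentialPDFReal γj).real_toNNReal
  rw [hdens, integral_withDensity_eq_integral_smul hmeas]
  -- the integrand equals an indicator
  have hind : (fun x => (exponentialPDFReal γj x).toNNReal
        • (if ik < rj - x then min rk (rj - x) - ik else 0))
      = Set.indicator (Icc 0 b)
          (fun x => (min rk (rj - x) - ik) * (γj * exp (-(γj * x)))) := by
    funext x
    rw [NNReal.smul_def, Real.coe_toNNReal _ (pdf_nonneg x), smul_eq_mul, pdf_eq]
    rcases le_or_gt 0 x with hx0 | hx0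
    · rcases lt_or_ge x b with hxb | hxb
      · have hcond : ik < rj - x := by simp [hb_def] at hxb; linarith
        rw [if_pos hx0, if_pos hcond,
          Set.indicator_of_mem (Set.mem_Icc.2 ⟨hx0, hxb.le⟩)]
        ring
      · rcases eq_or_lt_of_le hxb with hxb' | hxb'
        · have hcond : ¬ ik < rj - x := by simp [hb_def] at hxb'; simp; linarith
          rw [if_pos hx0, if_neg hcond,
            Set.indicator_of_mem (Set.mem_Icc.2 ⟨hx0, hxb'.ge⟩)]
          have : min rk (rj - x) = ik := by
            have : rj - x = ik := by simp [hb_def] at hxb'; linarith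
            rw [this, min_eq_right h1.le]
          rw [this]
          ring
        · have hcond : ¬ ik < rj - x := by simp [hb_def] at hxb'; simp; linarith
          rw [if_pos hx0, if_neg hcond,
            Set.indicator_of_notMem (by simp [Set.mem_Icc]; intro _; linarith)]
          ring
    · rw [if_neg (not_le.2 hx0),
        Set.indicator_of_notMem (by simp [Set.mem_Icc]; intro h; linarith)]
      ring
  rw [hind, integral_indicator measurableSet_Icc, integral_Icc_eq_integral_Ioc,
    ← intervalIntegral.integral_of_le hb.le]
  -- split the interval at a
  have hint : ∀ c d : ℝ, IntervalIntegrable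
      (fun x => (min rk (rj - x) - ik) * (γj * exp (-(γj * x)))) volume c d := by
    intro c d
    apply Continuous.intervalIntegrable
    exact (((continuous_const.min (continuous_const.sub continuous_id)).sub
      continuous_const).mul (continuous_const.mul
        ((continuous_const.mul continuous_id).neg.rexp)))
  rw [← intervalIntegral.integral_add_adjacent_intervals (hint 0 a) (hint a b)]
  -- first piece
  have hfirst : ∫ x in (0:ℝ)..a, (min rk (rj - x) - ik) * (γj * exp (-(γj * x)))
      = ∫ x in (0:ℝ)..a, (rk - ik) * (γj * exp (-(γj * x))) := by
    apply intervalIntegral.integral_congr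
    intro x hx
    rw [Set.uIcc_of_le ha.le, Set.mem_Icc] at hx
    have h3 : min rk (rj - x) = rk := min_eq_left (by simp [ha_def] at hx ⊢; linarith [hx.2])
    simp only [h3]
  have hfirst_val : ∫ x in (0:ℝ)..a, (rk - ik) * (γj * exp (-(γj * x)))
      = (fun x => -(rk - ik) * exp (-(γj * x))) a - (fun x => -(rk - ik) * exp (-(γj * x))) 0 := by
    refine intervalIntegral.integral_eq_sub_of_hasDerivAt
      (f := fun x => -(rk - ik) * exp (-(γj * x)))
      (f' := fun x => (rk - ik) * (γj * exp (-(γj * x)))) (fun x _ => ?_) ?_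
    · have h := (hasDerivAt_exp_neg_mul γj x).const_mul (-(rk - ik))
      convert h using 1
      · rfl
      ring
    · apply Continuous.intervalIntegrable
      exact continuous_const.mul (continuous_const.mul
        ((continuous_const.mul continuous_id).neg.rexp))
  -- second piece
  have hsecond : ∫ x in a..b, (min rk (rj - x) - ik) * (γj * exp (-(γj * x)))
      = ∫ x in a..b, (rj - x - ik) * (γj * exp (-(γj * x))) := by
    apply intervalIntegral.integral_congr
    intro x hx
    rw [Set.uIcc_of_le hab.le, Set.mem_Icc] at hx
    have h3 : min rk (rj - x) = rj - x := min_eq_right (by simp [ha_def] at hx ⊢; linarith [hx.1])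
    simp only [h3]
  have hsecond_val : ∫ x in a..b, (rj - x - ik) * (γj * exp (-(γj * x)))
      = (fun x => (x - (rj - ik - γj⁻¹)) * exp (-(γj * x))) b
        - (fun x => (x - (rj - ik - γj⁻¹)) * exp (-(γj * x))) a := by
    refine intervalIntegral.integral_eq_sub_of_hasDerivAt
      (f := fun x => (x - (rj - ik - γj⁻¹)) * exp (-(γj * x)))
      (f' := fun x => (rj - x - ik) * (γj * exp (-(γj * x)))) (fun x _ => ?_) ?_
    · have h := (((hasDerivAt_id x).sub_const (rj - ik - γj⁻¹)).mul
        (hasDerivAt_exp_neg_mul γj x))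
      convert h using 1
      · rfl
      · rfl
      simp only [id_eq]
      field_simp
      ring
    · apply Continuous.intervalIntegrable
      exact ((continuous_const.sub continuous_id).sub continuous_const).mul
        (continuous_const.mul ((continuous_const.mul continuous_id).neg.rexp))
  rw [hfirst, hfirst_val, hsecond, hsecond_val]
  have hEb : exp (-(γj * b)) = exp (-γj * (rj - rk)) * exp (-γj * (rk - ik)) := by
    rw [← exp_add]
    congr 1
    simp only [hb_def]; ring
  have hEa : exp (-(γj * a)) = exp (-γj * (rj - rk)) := by
    congr 1; simp only [ha_def]; ring
  simp only [hEb, hEa]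
  simp only [mul_zero, neg_zero, exp_zero, ha_def, hb_def]
  field_simp
  ring
end

section
/- Let $X \sim$ Exponential($\gamma_k$) and $Y \sim$ Exponential($\gamma_j$) be independent, fix removal times $r_k > r_j$, and set $i_k = r_k - X$, $i_j = r_j - Y$. Then the expected infective time pressure satisfies $\mathbb{E}[\min(r_k, i_j) - \min(i_j, i_k)\; \text{on}\; \{i_k < i_j\}\;\text{else}\;0] = e^{-\gamma_k(r_k - r_j)} \cdot \frac{\gamma_j}{\gamma_k(\gamma_k + \gamma_j)}$. -/
open MeasureTheory ProbabilityTheory Real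
open Set Filter
open scoped ENNReal NNReal

namespace ExpPressureAux

lemma expMeasure_eq (γ : ℝ) :
    expMeasure γ = volume.withDensity
      (fun x => ((Real.toNNReal (exponentialPDFReal γ x) : ℝ≥0) : ℝ≥0∞)) := rfl

lemma pdfReal_eq (γ x : ℝ) :
    exponentialPDFReal γ x = if 0 ≤ x then γ * exp (-(γ * x)) else 0 := by
  rw [exponentialPDFReal, gammaPDFReal]
  simp only [rpow_one, Real.Gamma_one, div_one, sub_self, rpow_zero, mul_one]

lemma integral_expMeasure (γ : ℝ) (hγ : 0 < γ) (g : ℝ → ℝ) :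
    ∫ x, g x ∂(expMeasure γ) = ∫ x in Ioi (0:ℝ), γ * exp (-(γ * x)) * g x := by
  rw [expMeasure_eq,
    integral_withDensity_eq_integral_smul ((measurable_exponentialPDFReal γ).real_toNNReal) g]
  have h1 : ∀ x : ℝ, Real.toNNReal (exponentialPDFReal γ x) • g x
      = (Ici (0:ℝ)).indicator (fun x => γ * exp (-(γ * x)) * g x) x := by
    intro x
    rw [NNReal.smul_def, Real.coe_toNNReal _ (exponentialPDFReal_nonneg hγ x), pdfReal_eq]
    by_cases h0 : 0 ≤ x <;> simp [indicator, h0]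
  rw [integral_congr_ae (Filter.EventuallyEq.of_eq (funext h1)),
    integral_indicator measurableSet_Ici, integral_Ici_eq_integral_Ioi]

lemma int_x_exp {b : ℝ} (hb : 0 < b) :
    IntegrableOn (fun x : ℝ => x * exp (-b * x)) (Ioi 0) := by
  have h := integrableOn_rpow_mul_exp_neg_mul_rpow (p := 1) (s := 1)
    (by norm_num) (by norm_num) hb
  simpa using h

lemma integrable_id_expMeasure {γ : ℝ} (hγ : 0 < γ) :
    Integrable (fun x : ℝ => x) (expMeasure γ) := by
  rw [expMeasure_eq, integrable_withDensity_iff_integrable_smul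
    ((measurable_exponentialPDFReal γ).real_toNNReal)]
  have h1 : ∀ x : ℝ, Real.toNNReal (exponentialPDFReal γ x) • x
      = (Ici (0:ℝ)).indicator (fun x => γ * exp (-(γ * x)) * x) x := by
    intro x
    rw [NNReal.smul_def, Real.coe_toNNReal _ (exponentialPDFReal_nonneg hγ x), pdfReal_eq]
    by_cases h0 : 0 ≤ x <;> simp [indicator, h0]
  rw [show (fun x : ℝ => Real.toNNReal (exponentialPDFReal γ x) • x)
      = (Ici (0:ℝ)).indicator (fun x => γ * exp (-(γ * x)) * x) from funext h1,
    integrable_indicator_iff measurableSet_Ici, integrableOn_Ici_iff_integrableOn_Ioi]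
  refine MeasureTheory.IntegrableOn.congr_fun ((int_x_exp hγ).const_mul γ)
    (fun x _ => ?_) measurableSet_Ioi
  rw [neg_mul]; ring

lemma expMeasure_Iio_zero (γ : ℝ) : expMeasure γ (Iio 0) = 0 := by
  rw [show expMeasure γ = volume.withDensity (exponentialPDF γ) from rfl,
    withDensity_apply _ measurableSet_Iio]
  exact lintegral_exponentialPDF_of_nonpos le_rfl

lemma inner_eval {γ : ℝ} (hγ : 0 < γ) (s : ℝ) :
    ∫ y, (if y < s then s - y else 0) ∂(expMeasure γ)
      = if 0 ≤ s then s - (1 - exp (-(γ * s))) / γ else 0 := by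
  rw [integral_expMeasure γ hγ]
  by_cases hs : 0 ≤ s
  · rw [if_pos hs]
    have h1 : ∀ y : ℝ, γ * exp (-(γ * y)) * (if y < s then s - y else 0)
        = (Iio s).indicator (fun y => γ * exp (-(γ * y)) * (s - y)) y := by
      intro y; by_cases hy : y < s <;> simp [indicator, hy]
    rw [setIntegral_congr_fun measurableSet_Ioi (fun y _ => h1 y),
      setIntegral_indicator measurableSet_Iio]
    have h2 : Ioi (0:ℝ) ∩ Iio s = Ioo 0 s := Ioi_inter_Iio
    rw [h2, ← integral_Ioc_eq_integral_Ioo, ← intervalIntegral.integral_of_le hs]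
    have hderiv : ∀ y ∈ uIcc (0:ℝ) s,
        HasDerivAt (fun y : ℝ => (y - s + 1/γ) * exp (-(γ * y)))
          (γ * exp (-(γ * y)) * (s - y)) y := by
      intro y _
      have hlin : HasDerivAt (fun y : ℝ => y - s + 1/γ) 1 y :=
        ((hasDerivAt_id y).sub_const s).add_const _
      have hexp : HasDerivAt (fun y : ℝ => exp (-(γ * y)))
          (exp (-(γ * y)) * -(γ * 1)) y :=
        (((hasDerivAt_id y).const_mul γ).neg).exp
      refine (hlin.mul hexp).congr_deriv ?_
      linear_combination (-exp (-(γ * y))) * (one_div_mul_cancel hγ.ne')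
    rw [intervalIntegral.integral_eq_sub_of_hasDerivAt hderiv ?_]
    · simp only [mul_zero, neg_zero, exp_zero]
      field_simp
      ring
    · apply Continuous.intervalIntegrable
      fun_prop
  · rw [if_neg hs]
    rw [setIntegral_congr_fun measurableSet_Ioi
      (fun y (hy : y ∈ Ioi (0:ℝ)) => ?_), integral_zero]
    have : ¬ y < s := by simp only [mem_Ioi] at hy; linarith
    simp [this]

end ExpPressureAux

open ExpPressureAux

/-- Lemma 1 of the paper (case `r_j < r_k`): with independent `X ~ Exp(γ_k)`,
`Y ~ Exp(γ_j)`, `i_k = r_k - X`, `i_j = r_j - Y`, and only removal times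
observed, the expected infective time pressure is
`E[τ_{kj}] = e^{-γ_k(r_k - r_j)} γ_j γ_k⁻¹ (γ_k + γ_j)⁻¹`. -/
theorem expected_pressure_removal_only_rj_lt_rk
    (γk γj rk rj : ℝ) (hγk : 0 < γk) (hγj : 0 < γj) (h : rj < rk) :
    ∫ p : ℝ × ℝ,
        (if rk - p.1 < rj - p.2 then min rk (rj - p.2) - (rk - p.1) else 0)
        ∂((expMeasure γk).prod (expMeasure γj))
      = exp (-γk * (rk - rj)) * (γj / (γk * (γk + γj))) := by

  classical
  have hd : 0 < rk - rj := sub_pos.mpr h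
  set d := rk - rj with hdd
  haveI hPk : IsProbabilityMeasure (expMeasure γk) := isProbabilityMeasure_expMeasure hγk
  haveI hPj : IsProbabilityMeasure (expMeasure γj) := isProbabilityMeasure_expMeasure hγj
  have hae : ∀ᵐ p : ℝ × ℝ ∂((expMeasure γk).prod (expMeasure γj)), 0 ≤ p.2 := by
    rw [ae_iff]
    have hs : {p : ℝ × ℝ | ¬ 0 ≤ p.2} = (univ : Set ℝ) ×ˢ Iio 0 := by
      ext p; simp [not_le]
    rw [hs, Measure.prod_prod, expMeasure_Iio_zero, mul_zero]
  have hcongr : (fun p : ℝ × ℝ =>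
        if rk - p.1 < rj - p.2 then min rk (rj - p.2) - (rk - p.1) else 0)
      =ᵐ[(expMeasure γk).prod (expMeasure γj)]
      (fun p : ℝ × ℝ => if p.2 < p.1 - d then p.1 - d - p.2 else 0) := by
    filter_upwards [hae] with p hp
    have hmin : min rk (rj - p.2) = rj - p.2 := min_eq_right (by linarith)
    by_cases hc : p.2 < p.1 - d
    · rw [if_pos (by linarith [hdd]), if_pos hc, hmin]; linarith [hdd]
    · rw [if_neg (fun hh => hc (by linarith [hdd, hh])), if_neg hc]
  rw [integral_congr_ae hcongr]
  have hFmeas : AEStronglyMeasurable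
      (fun p : ℝ × ℝ => if p.2 < p.1 - d then p.1 - d - p.2 else 0)
      ((expMeasure γk).prod (expMeasure γj)) := by
    apply Measurable.aestronglyMeasurable
    exact Measurable.ite (measurableSet_lt measurable_snd (measurable_fst.sub measurable_const))
      ((measurable_fst.sub measurable_const).sub measurable_snd) measurable_const
  have habsk : Integrable (fun x : ℝ => |x|) (expMeasure γk) :=
    (integrable_id_expMeasure hγk).abs
  have habsj : Integrable (fun x : ℝ => |x|) (expMeasure γj) :=
    (integrable_id_expMeasure hγj).abs
  have hGint : Integrable (fun p : ℝ × ℝ => |p.1| * 1 + 1 * |p.2| + |d|)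
      ((expMeasure γk).prod (expMeasure γj)) :=
    ((habsk.mul_prod (integrable_const 1)).add
      ((integrable_const 1).mul_prod habsj)).add (integrable_const |d|)
  have hFint : Integrable (fun p : ℝ × ℝ => if p.2 < p.1 - d then p.1 - d - p.2 else 0)
      ((expMeasure γk).prod (expMeasure γj)) := by
    refine hGint.mono hFmeas (Filter.Eventually.of_forall fun p => ?_)
    rw [Real.norm_eq_abs, Real.norm_eq_abs]
    have h1 := le_abs_self p.1; have h2 := neg_abs_le p.1
    have h3 := le_abs_self p.2; have h4 := neg_abs_le p.2
    have h5 := le_abs_self d; have h6 := neg_abs_le d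
    rw [abs_of_nonneg (by positivity : (0:ℝ) ≤ |p.1| * 1 + 1 * |p.2| + |d|)]
    by_cases hc : p.2 < p.1 - d
    · rw [if_pos hc]
      rcases abs_cases (p.1 - d - p.2) with ⟨he, _⟩ | ⟨he, _⟩ <;> rw [he] <;> linarith
    · rw [if_neg hc, abs_zero]; positivity
  rw [MeasureTheory.integral_prod _ hFint]
  simp only [inner_eval hγj]
  rw [integral_expMeasure γk hγk]
  have h2 : ∀ x : ℝ, γk * exp (-(γk * x)) *
      (if 0 ≤ x - d then (x - d) - (1 - exp (-(γj * (x - d)))) / γj else 0)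
      = (Ici d).indicator
        (fun x => γk * exp (-(γk * x)) * ((x - d) - (1 - exp (-(γj * (x - d)))) / γj)) x := by
    intro x
    have hx : x ∈ Ici d ↔ 0 ≤ x - d := by simp [mem_Ici, sub_nonneg]
    by_cases hc : 0 ≤ x - d
    · rw [if_pos hc, indicator_of_mem (hx.mpr hc)]
    · rw [if_neg hc, indicator_of_notMem (fun hm => hc (hx.mp hm)), mul_zero]
  have h3 : Ioi (0:ℝ) ∩ Ici d = Ici d :=
    inter_eq_self_of_subset_right fun x hx => lt_of_lt_of_le hd hx
  rw [setIntegral_congr_fun measurableSet_Ioi (fun x _ => h2 x),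
    setIntegral_indicator measurableSet_Ici, h3, integral_Ici_eq_integral_Ioi]
  set c : ℝ := γk / (γj * (γk + γj)) with hc
  have hderiv : ∀ x ∈ Ici d, HasDerivAt (fun x : ℝ =>
      -(x - d) * exp (-(γk * x)) - exp (-(γk * x)) / γk + exp (-(γk * x)) / γj
        - c * exp (γj * d - (γk + γj) * x))
      (γk * exp (-(γk * x)) * ((x - d) - (1 - exp (-(γj * (x - d)))) / γj)) x := by
    intro x _
    have he1 : HasDerivAt (fun x : ℝ => exp (-(γk * x))) (exp (-(γk * x)) * -(γk * 1)) x :=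
      (((hasDerivAt_id x).const_mul γk).neg).exp
    have he2 : HasDerivAt (fun x : ℝ => exp (γj * d - (γk + γj) * x))
        (exp (γj * d - (γk + γj) * x) * (0 - (γk + γj) * 1)) x :=
      ((hasDerivAt_const x (γj * d)).sub ((hasDerivAt_id x).const_mul (γk + γj))).exp
    have hlin : HasDerivAt (fun x : ℝ => -(x - d)) (-1) x := ((hasDerivAt_id x).sub_const d).neg
    have hcomb := (((hlin.mul he1).sub (he1.div_const γk)).add (he1.div_const γj)).sub
      (he2.const_mul c)
    refine hcomb.congr_deriv ?_
    have hE : exp (γj * d - (γk + γj) * x) = exp (-(γk * x)) * exp (-(γj * (x - d))) := by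
      rw [← exp_add]; congr 1; ring
    rw [hE, hc]
    field_simp
    ring
  have hint : IntegrableOn (fun x : ℝ =>
      γk * exp (-(γk * x)) * ((x - d) - (1 - exp (-(γj * (x - d)))) / γj)) (Ioi d) := by
    have i1 : IntegrableOn (fun x : ℝ => x * exp (-γk * x)) (Ioi d) :=
      (int_x_exp hγk).mono_set (Ioi_subset_Ioi hd.le)
    have i2 : IntegrableOn (fun x : ℝ => exp (-γk * x)) (Ioi d) := exp_neg_integrableOn_Ioi d hγk
    have i3 : IntegrableOn (fun x : ℝ => exp (-(γk + γj) * x)) (Ioi d) :=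
      exp_neg_integrableOn_Ioi d (by linarith)
    have hsum : IntegrableOn (fun x : ℝ => γk * (x * exp (-γk * x))
        - (γk * d) * exp (-γk * x) - (γk / γj) * exp (-γk * x)
        + (γk / γj * exp (γj * d)) * exp (-(γk + γj) * x)) (Ioi d) :=
      (((i1.const_mul γk).sub (i2.const_mul (γk * d))).sub (i2.const_mul (γk / γj))).add
        (i3.const_mul _)
    refine MeasureTheory.IntegrableOn.congr_fun hsum (fun x _ => ?_) measurableSet_Ioi
    have hE : exp (-(γk * x)) * exp (-(γj * (x - d)))
        = exp (γj * d) * exp (-((γk + γj) * x)) := by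
      rw [← exp_add, ← exp_add]; congr 1; ring
    simp only [neg_mul]
    linear_combination (γk / γj) * hE.symm
  have te1 : Tendsto (fun x : ℝ => exp (-(γk * x))) atTop (nhds 0) := by
    have hin : Tendsto (fun x : ℝ => γk * id x) atTop atTop :=
      tendsto_id.const_mul_atTop hγk
    exact tendsto_exp_neg_atTop_nhds_zero.comp hin
  have txe : Tendsto (fun x : ℝ => x * exp (-(γk * x))) atTop (nhds 0) := by
    have hin : Tendsto (fun x : ℝ => γk * id x) atTop atTop :=
      tendsto_id.const_mul_atTop hγk
    have t0 := (tendsto_pow_mul_exp_neg_atTop_nhds_zero 1).comp hin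
    have t1 := t0.const_mul (1/γk)
    rw [mul_zero] at t1
    refine t1.congr fun x => ?_
    show 1/γk * ((γk * id x) ^ (1:ℕ) * exp (-(γk * id x))) = x * exp (-(γk * x))
    rw [pow_one, id_eq]
    field_simp
  have txd : Tendsto (fun x : ℝ => -(x - d) * exp (-(γk * x))) atTop (nhds 0) := by
    have := (txe.neg).add (te1.const_mul d)
    simp only [neg_zero, mul_zero, zero_add, add_zero] at this
    refine this.congr fun x => ?_
    ring
  have tE3 : Tendsto (fun x : ℝ => exp (γj * d - (γk + γj) * x)) atTop (nhds 0) := by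
    have hin : Tendsto (fun x : ℝ => (γk + γj) * id x) atTop atTop :=
      tendsto_id.const_mul_atTop (by linarith)
    have t0 : Tendsto (fun x : ℝ => exp (-((γk + γj) * id x))) atTop (nhds 0) :=
      tendsto_exp_neg_atTop_nhds_zero.comp hin
    have t1 := t0.const_mul (exp (γj * d))
    rw [mul_zero] at t1
    refine t1.congr fun x => ?_
    show exp (γj * d) * exp (-((γk + γj) * id x)) = exp (γj * d - (γk + γj) * x)
    rw [← exp_add, id_eq]
    congr 1
  have hF0 : Tendsto (fun x : ℝ =>
      -(x - d) * exp (-(γk * x)) - exp (-(γk * x)) / γk + exp (-(γk * x)) / γj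
        - c * exp (γj * d - (γk + γj) * x)) atTop (nhds 0) := by
    have := ((txd.sub (te1.div_const γk)).add (te1.div_const γj)).sub (tE3.const_mul c)
    simpa using this
  rw [MeasureTheory.integral_Ioi_of_hasDerivAt_of_tendsto' hderiv hint hF0]
  have hE1 : exp (γj * d - (γk + γj) * d) = exp (-γk * d) := by congr 1; ring
  have hE2 : exp (-(γk * d)) = exp (-γk * d) := by congr 1; ring
  rw [hE1, hE2, hc]
  field_simp
  ring
end

section
/- Let $X \sim$ Exponential($\gamma_k$) and $Y \sim$ Exponential($\gamma_j$) be independent, fix removal times $r_j > r_k$, and set $i_k = r_k - X$, $i_j = r_j - Y$. Then $\mathbb{E}[\tau_{kj}] = e^{-\gamma_j(r_j - r_k)} \cdot \frac{\gamma_j}{\gamma_k(\gamma_k+\gamma_j)} + \gamma_k^{-1}\big(1 - e^{-\gamma_j(r_j - r_k)}\big)$, where $\tau_{kj} = \min(r_k, i_j) - \min(i_j, i_k)$ on $\{i_k < i_j\}$ and $0$ otherwise. -/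
open MeasureTheory ProbabilityTheory Real
open Set
open scoped ENNReal NNReal


lemma myexp_hasDeriv (r y : ℝ) : HasDerivAt (fun t : ℝ => exp (-(r * t))) (-r * exp (-(r * y))) y := by
  have h1 : HasDerivAt (fun t : ℝ => -(r * t)) (-r) y := by
    simpa [neg_mul] using (hasDerivAt_id y).const_mul (-r)
  simpa [mul_comm] using h1.exp

lemma pdfReal_eq_of_mem {r x : ℝ} (hx : x ∈ Ioi (0:ℝ)) :
    exponentialPDFReal r x = r * exp (-(r * x)) := by
  rw [exponentialPDFReal, gammaPDFReal, if_pos (le_of_lt hx)]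
  simp [Real.Gamma_one, Real.rpow_one, sub_self, Real.rpow_zero]

lemma integral_expMeasure (r : ℝ) (hr : 0 < r) (g : ℝ → ℝ) :
    ∫ x, g x ∂(expMeasure r) = ∫ x in Ioi 0, (r * exp (-(r * x))) * g x := by
  have hmeas : Measurable fun x => (exponentialPDFReal r x).toNNReal :=
    (measurable_exponentialPDFReal r).real_toNNReal
  have h1 : expMeasure r
      = volume.withDensity (fun x => ((exponentialPDFReal r x).toNNReal : ℝ≥0∞)) := rfl
  rw [h1, integral_withDensity_eq_integral_smul hmeas]
  rw [← setIntegral_eq_integral_of_forall_compl_eq_zero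
    (s := Ici (0:ℝ)) (fun x hx => ?_), integral_Ici_eq_integral_Ioi]
  · refine setIntegral_congr_fun measurableSet_Ioi (fun x hx => ?_)
    rw [NNReal.smul_def, Real.coe_toNNReal _ (exponentialPDFReal_nonneg hr x),
      pdfReal_eq_of_mem hx, smul_eq_mul]
  · have hx' : x < 0 := not_le.mp hx
    have : exponentialPDFReal r x = 0 := by
      rw [exponentialPDFReal, gammaPDFReal, if_neg (not_le.mpr hx')]
    simp [this]

lemma myint_exp {r : ℝ} (hr : 0 < r) : ∫ x in Ioi (0:ℝ), exp (-(r * x)) = r⁻¹ := by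
  have h := integral_rpow_mul_exp_neg_mul_Ioi (a := 1) zero_lt_one hr
  rw [show ∫ x in Ioi (0:ℝ), exp (-(r * x))
      = ∫ t in Ioi (0:ℝ), t ^ ((1:ℝ) - 1) * exp (-(r * t)) from
    setIntegral_congr_fun measurableSet_Ioi (fun t ht => by
      rw [sub_self, Real.rpow_zero, one_mul]), h, Real.Gamma_one]
  rw [Real.rpow_one, one_div, mul_one]

lemma myint_xexp {r : ℝ} (hr : 0 < r) : ∫ x in Ioi (0:ℝ), x * exp (-(r * x)) = r⁻¹ ^ 2 := by
  have := integral_rpow_mul_exp_neg_mul_Ioi (a := 2) zero_lt_two hr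
  rw [show ∫ x in Ioi (0:ℝ), x * exp (-(r * x))
      = ∫ t in Ioi (0:ℝ), t ^ ((2:ℝ) - 1) * exp (-(r * t)) from
    setIntegral_congr_fun measurableSet_Ioi (fun t ht => by
      norm_num [Real.rpow_one]), this, Real.Gamma_two]
  rw [mul_one]; rw [one_div]; norm_num

lemma myib_exp {r : ℝ} (hr : 0 < r) : IntegrableOn (fun x => exp (-(r * x))) (Ioi (0:ℝ)) := by
  simpa [neg_mul] using exp_neg_integrableOn_Ioi 0 hr

lemma myib_xexp {r : ℝ} (hr : 0 < r) : IntegrableOn (fun x => x * exp (-(r * x))) (Ioi (0:ℝ)) := by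
  have h := integrableOn_rpow_mul_exp_neg_mul_rpow (p := 1) (s := 1) (b := r)
    (by norm_num) zero_lt_one hr
  refine h.congr_fun (fun x hx => ?_) measurableSet_Ioi
  beta_reduce
  rw [neg_mul, Real.rpow_one]

set_option maxHeartbeats 1000000 in
lemma inner_calc (γj d x : ℝ) (hγj : 0 < γj) (hd : 0 < d) (hx : 0 < x) :
    ∫ y in Ioi (0:ℝ), (γj * exp (-(γj * y))) * (if y < d + x then x - max 0 (y - d) else 0)
      = x - γj⁻¹ * exp (-(γj * d)) * (1 - exp (-(γj * x))) := by
  have hdx : (0:ℝ) < d + x := by linarith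
  have hc1 : Continuous fun y : ℝ => exp (-(γj * y)) :=
    Real.continuous_exp.comp ((continuous_const.mul continuous_id).neg)
  set f : ℝ → ℝ := fun y => (γj * exp (-(γj * y))) * (if y < d + x then x - max 0 (y - d) else 0)
    with hf
  set fc : ℝ → ℝ := fun y => (γj * exp (-(γj * y))) * (x - max 0 (y - d)) with hfc
  have hfc_cont : Continuous fc := by
    apply Continuous.mul
    · exact continuous_const.mul ((continuous_const.mul continuous_id).neg.rexp)
    · exact continuous_const.sub (continuous_const.max (continuous_id.sub continuous_const))
  have int1 : IntegrableOn f (Ioo 0 (d + x)) := by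
    refine ((hfc_cont.integrableOn_Icc (a := 0) (b := d + x)).mono_set
      Ioo_subset_Icc_self).congr_fun (fun y hy => ?_) measurableSet_Ioo
    rw [hf, hfc]
    simp only [if_pos hy.2]
  have int2 : IntegrableOn f (Ici (d + x)) := by
    refine (integrableOn_zero (ε' := ℝ)).congr_fun (fun y hy => ?_) measurableSet_Ici
    rw [hf]
    simp only [if_neg (not_lt.mpr (Set.mem_Ici.mp hy)), mul_zero, Pi.zero_apply]
  have disj : Disjoint (Ioo (0:ℝ) (d + x)) (Ici (d + x)) :=
    (Set.Iio_disjoint_Ici le_rfl).mono_left Set.Ioo_subset_Iio_self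
  rw [← Set.Ioo_union_Ici_eq_Ioi hdx, setIntegral_union disj measurableSet_Ici int1 int2]
  have h2 : ∫ y in Ici (d + x), f y = 0 := by
    rw [setIntegral_congr_fun measurableSet_Ici
      (fun y hy => by
        rw [hf]; simp only [if_neg (not_lt.mpr (Set.mem_Ici.mp hy)), mul_zero] : EqOn f (fun _ => (0:ℝ)) _)]
    exact integral_zero _ _
  have h1 : ∫ y in Ioo 0 (d + x), f y = ∫ y in (0:ℝ)..(d + x), fc y := by
    rw [intervalIntegral.integral_of_le hdx.le, integral_Ioc_eq_integral_Ioo]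
    refine setIntegral_congr_fun measurableSet_Ioo (fun y hy => ?_)
    rw [hf, hfc]
    simp only [if_pos hy.2]
  rw [h1, h2, add_zero]
  have hsplit := intervalIntegral.integral_add_adjacent_intervals (a := (0:ℝ)) (b := d)
    (c := d + x) (μ := volume) (hfc_cont.intervalIntegrable _ _) (hfc_cont.intervalIntegrable _ _)
  rw [← hsplit]
  have hderA : ∀ y ∈ uIcc (0:ℝ) d, HasDerivAt (fun y => -x * exp (-(γj * y)))
      (x * (γj * exp (-(γj * y)))) y := by
    intro y _
    have h2 := (myexp_hasDeriv γj y).const_mul (-x)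
    refine h2.congr_deriv ?_
    ring
  have hintA : IntervalIntegrable (fun y => x * (γj * exp (-(γj * y)))) volume 0 d :=
    (continuous_const.mul (continuous_const.mul hc1)).intervalIntegrable _ _
  have hAval := intervalIntegral.integral_eq_sub_of_hasDerivAt hderA hintA
  have hA : ∫ y in (0:ℝ)..d, fc y = x - x * exp (-(γj * d)) := by
    rw [intervalIntegral.integral_congr (g := fun y => x * (γj * exp (-(γj * y))))
      (fun y hy => ?_), hAval]
    · rw [mul_zero, neg_zero, Real.exp_zero, mul_one]
      ring
    · rw [Set.uIcc_of_le hd.le] at hy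
      rw [hfc]
      simp only
      rw [max_eq_left (by linarith [hy.2] : y - d ≤ 0), sub_zero]
      ring
  have hderB : ∀ y ∈ uIcc d (d + x), HasDerivAt (fun y => (y - (x + d) + γj⁻¹) * exp (-(γj * y)))
      ((γj * exp (-(γj * y))) * (x - (y - d))) y := by
    intro y _
    have h1 : HasDerivAt (fun y : ℝ => y - (x + d) + γj⁻¹) 1 y :=
      ((hasDerivAt_id y).sub_const _).add_const _
    have h2 := h1.mul (myexp_hasDeriv γj y)
    refine h2.congr_deriv ?_
    field_simp
    ring
  have hintB : IntervalIntegrable (fun y => (γj * exp (-(γj * y))) * (x - (y - d))) volume d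
      (d + x) := ((continuous_const.mul hc1).mul
    (continuous_const.sub (continuous_id.sub continuous_const))).intervalIntegrable _ _
  have hBval := intervalIntegral.integral_eq_sub_of_hasDerivAt hderB hintB
  have hB : ∫ y in d..(d + x), fc y
      = γj⁻¹ * exp (-(γj * (d + x))) - (γj⁻¹ - x) * exp (-(γj * d)) := by
    rw [intervalIntegral.integral_congr
      (g := fun y => (γj * exp (-(γj * y))) * (x - (y - d))) (fun y hy => ?_), hBval]
    · ring
    · rw [Set.uIcc_of_le (by linarith : d ≤ d + x)] at hy
      rw [hfc]
      simp only
      rw [max_eq_right (by linarith [hy.1] : (0:ℝ) ≤ y - d)]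
  rw [hA, hB, show -(γj * (d + x)) = -(γj * d) + -(γj * x) by ring, Real.exp_add]
  ring


set_option maxHeartbeats 1000000 in
/-- Lemma 1 of the paper (case `r_j > r_k`): with independent `X ~ Exp(γ_k)`,
`Y ~ Exp(γ_j)`, `i_k = r_k - X`, `i_j = r_j - Y`, and only removal times
observed, the expected infective time pressure is
`E[τ_{kj}] = e^{-γ_j(r_j - r_k)} γ_j γ_k⁻¹ (γ_k + γ_j)⁻¹ + γ_k⁻¹ (1 - e^{-γ_j(r_j - r_k)})`. -/
theorem expected_pressure_removal_only_rj_gt_rk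
    (γk γj rk rj : ℝ) (hγk : 0 < γk) (hγj : 0 < γj) (h : rk < rj) :
    ∫ p : ℝ × ℝ,
        (if rk - p.1 < rj - p.2 then min rk (rj - p.2) - (rk - p.1) else 0)
        ∂((expMeasure γk).prod (expMeasure γj))
      = exp (-γj * (rj - rk)) * (γj / (γk * (γk + γj)))
        + γk⁻¹ * (1 - exp (-γj * (rj - rk))) := by
  haveI := isProbabilityMeasure_expMeasure hγk
  haveI := isProbabilityMeasure_expMeasure hγj
  have hFG : (fun p : ℝ × ℝ => if rk - p.1 < rj - p.2 then min rk (rj - p.2) - (rk - p.1) else 0)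
      = fun p : ℝ × ℝ => if p.2 < (rj - rk) + p.1 then p.1 - max 0 (p.2 - (rj - rk)) else 0 := by
    funext p
    have hc : (rk - p.1 < rj - p.2) ↔ (p.2 < (rj - rk) + p.1) := by
      constructor <;> intro <;> linarith
    by_cases hcc : rk - p.1 < rj - p.2
    · rw [if_pos hcc, if_pos (hc.mp hcc)]
      rcases le_total (rj - p.2) rk with h' | h'
      · rw [min_eq_right h', max_eq_right (by linarith : (0:ℝ) ≤ p.2 - (rj - rk))]; ring
      · rw [min_eq_left h', max_eq_left (by linarith : p.2 - (rj - rk) ≤ 0)]; ring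
    · rw [if_neg hcc, if_neg (fun hh => hcc (hc.mpr hh))]
  rw [hFG]
  set G : ℝ × ℝ → ℝ :=
    fun p : ℝ × ℝ => if p.2 < (rj - rk) + p.1 then p.1 - max 0 (p.2 - (rj - rk)) else 0 with hG
  have hmeasG : Measurable G :=
    Measurable.ite (measurableSet_lt measurable_snd (measurable_const.add measurable_fst))
      (measurable_fst.sub (measurable_const.max (measurable_snd.sub measurable_const)))
      measurable_const
  -- integrability of the identity wrt expMeasure γk
  have hxint : Integrable (fun x : ℝ => x) (expMeasure γk) := by
    have hpdf_meas : Measurable (exponentialPDF γk) :=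
      (measurable_exponentialPDFReal γk).ennreal_ofReal
    rw [show expMeasure γk = volume.withDensity (exponentialPDF γk) from rfl,
      integrable_withDensity_iff hpdf_meas (ae_of_all _ fun x => ENNReal.ofReal_lt_top)]
    have heq : (fun x : ℝ => x * (exponentialPDF γk x).toReal)
        = fun x => x * exponentialPDFReal γk x := funext fun x => by
      rw [exponentialPDF, ENNReal.toReal_ofReal (exponentialPDFReal_nonneg hγk x)]
    rw [heq]
    have hIic : IntegrableOn (fun x => x * exponentialPDFReal γk x) (Iic 0) := by
      refine (integrableOn_zero (ε' := ℝ)).congr_fun (fun y hy => ?_) measurableSet_Iic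
      have hy' : y ≤ 0 := hy
      rcases eq_or_lt_of_le hy' with hy0 | hy0
      · simp [hy0]
      · have : exponentialPDFReal γk y = 0 := by
          rw [exponentialPDFReal, gammaPDFReal, if_neg (not_le.mpr hy0)]
        simp [this]
    have hIoi : IntegrableOn (fun x => x * exponentialPDFReal γk x) (Ioi 0) := by
      have base : IntegrableOn (fun x => γk * (x * exp (-(γk * x)))) (Ioi (0:ℝ)) :=
        (myib_xexp hγk).const_mul γk
      refine base.congr_fun (fun y hy => ?_) measurableSet_Ioi
      rw [pdfReal_eq_of_mem hy]
      ring
    have hu := hIic.union hIoi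
    rw [Set.Iic_union_Ioi] at hu
    exact integrableOn_univ.mp hu
  have hdom : Integrable (fun p : ℝ × ℝ => p.1 * 1)
      ((expMeasure γk).prod (expMeasure γj)) :=
    Integrable.mul_prod hxint (integrable_const 1)
  have hbound : ∀ p : ℝ × ℝ, ‖G p‖ ≤ ‖p.1 * 1‖ := by
    intro p
    rw [hG]
    simp only [mul_one, Real.norm_eq_abs]
    split_ifs with hcc
    · rcases le_total (p.2 - (rj - rk)) 0 with hm | hm
      · rw [max_eq_left hm, sub_zero]
      · rw [max_eq_right hm]
        have h0 : (0:ℝ) ≤ p.1 := le_trans hm (by linarith)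
        rw [abs_of_nonneg h0, abs_le]
        constructor <;> linarith
    · simp [abs_nonneg]
  have hInt : Integrable G ((expMeasure γk).prod (expMeasure γj)) :=
    hdom.mono hmeasG.aestronglyMeasurable (ae_of_all _ hbound)
  rw [MeasureTheory.integral_prod _ hInt, integral_expMeasure γk hγk]
  have hinner : ∀ x ∈ Ioi (0:ℝ), (γk * exp (-(γk * x))) * (∫ y, G (x, y) ∂expMeasure γj)
      = (γk * exp (-(γk * x)))
        * (x - γj⁻¹ * exp (-(γj * (rj - rk))) * (1 - exp (-(γj * x)))) := by
    intro x hx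
    congr 1
    rw [integral_expMeasure γj hγj]
    exact inner_calc γj (rj - rk) x hγj (by linarith) hx
  rw [setIntegral_congr_fun measurableSet_Ioi hinner]
  set c : ℝ := exp (-(γj * (rj - rk))) with hcdef
  have hsum : 0 < γk + γj := by linarith
  have hptw : ∀ x ∈ Ioi (0:ℝ),
      (γk * exp (-(γk * x))) * (x - γj⁻¹ * c * (1 - exp (-(γj * x))))
      = (γk * (x * exp (-(γk * x))) - (γj⁻¹ * c * γk) * exp (-(γk * x)))
        + (γj⁻¹ * c * γk) * exp (-((γk + γj) * x)) := by
    intro x _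
    have he : exp (-((γk + γj) * x)) = exp (-(γk * x)) * exp (-(γj * x)) := by
      rw [← Real.exp_add]; ring_nf
    rw [he]; ring
  rw [setIntegral_congr_fun measurableSet_Ioi hptw]
  have i1 : IntegrableOn (fun x => γk * (x * exp (-(γk * x)))) (Ioi (0:ℝ)) :=
    (myib_xexp hγk).const_mul γk
  have i2 : IntegrableOn (fun x => (γj⁻¹ * c * γk) * exp (-(γk * x))) (Ioi (0:ℝ)) :=
    (myib_exp hγk).const_mul _
  have i3 : IntegrableOn (fun x => (γj⁻¹ * c * γk) * exp (-((γk + γj) * x))) (Ioi (0:ℝ)) :=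
    (myib_exp hsum).const_mul _
  have i12 : IntegrableOn (fun x => γk * (x * exp (-(γk * x)))
      - (γj⁻¹ * c * γk) * exp (-(γk * x))) (Ioi (0:ℝ)) := i1.sub i2
  rw [integral_add i12 i3, integral_sub i1 i2, integral_const_mul,
    integral_const_mul, integral_const_mul, myint_xexp hγk, myint_exp hγk, myint_exp hsum]
  rw [hcdef, show -γj * (rj - rk) = -(γj * (rj - rk)) by ring]
  have hk0 : γk ≠ 0 := ne_of_gt hγk
  have hj0 : γj ≠ 0 := ne_of_gt hγj
  have hs0 : γk + γj ≠ 0 := ne_of_gt hsum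
  field_simp
  ring
end

section
/- Let $X \sim$ Erlang($m, \gamma_k$) with $m \in \mathbb{N}$, $m \geq 1$, $\gamma_k > 0$, fix $r_k$ and $i_j$ with $i_j < r_k$, and set $i_k = r_k - X$. Then $\mathbb{E}[(i_j - i_k)\,\mathbf{1}\{i_k < i_j\}] = \sum_{l=0}^{m-1} P_{\gamma_k(r_k - i_j)}(l)\,(m - l)\,\gamma_k^{-1}$, where $P_{\lambda}(l) = e^{-\lambda}\lambda^l / l!$ is the Poisson($\lambda$) probability mass function. -/
open MeasureTheory ProbabilityTheory Real Finset

open Set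


lemma moment_aux (n : ℕ) {γ : ℝ} (hγ : 0 < γ) :
    ∫ t in Ioi (0:ℝ), t ^ n * exp (-(γ * t)) = (n.factorial : ℝ) / γ ^ (n+1) := by
  calc ∫ t in Ioi (0:ℝ), t ^ n * exp (-(γ * t))
      = ∫ t in Ioi (0:ℝ), t ^ (((n+1:ℕ):ℝ) - 1) * exp (-(γ * t)) := by
        refine setIntegral_congr_fun measurableSet_Ioi (fun t ht => ?_)
        rw [show ((n+1:ℕ):ℝ) - 1 = ((n:ℕ):ℝ) by push_cast; ring, rpow_natCast]
    _ = (1/γ) ^ (((n+1:ℕ)):ℝ) * Real.Gamma ((n+1:ℕ):ℝ) :=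
        integral_rpow_mul_exp_neg_mul_Ioi (by positivity) hγ
    _ = (n.factorial : ℝ) / γ ^ (n+1) := by
        rw [rpow_natCast, show ((n+1:ℕ):ℝ) = (n:ℝ)+1 by push_cast; ring, Real.Gamma_nat_eq_factorial, div_pow, one_pow]
        ring

lemma integ_aux (n : ℕ) {γ : ℝ} (hγ : 0 < γ) :
    IntegrableOn (fun t => t ^ n * exp (-(γ * t))) (Ioi (0:ℝ)) := by
  have h := integrableOn_rpow_mul_exp_neg_mul_rpow (s := (n:ℝ)) (p := 1)
    (by exact_mod_cast neg_one_lt_zero.trans_le (Nat.cast_nonneg n)) one_pos hγ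
  refine h.congr_fun (fun t ht => ?_) measurableSet_Ioi
  dsimp only
  rw [rpow_natCast, rpow_one, neg_mul]

/-- Erlang version of Lemma 3 (Lemma 6 of the paper, case `i_j < r_k`):
with `X ~ Erlang(m, γ_k)` and `i_k = r_k - X`, the expected infective time
pressure is `E[(i_j - i_k) 1{i_k < i_j}] = ∑_{l=0}^{m-1} P_{γ_k(r_k-i_j)}(l) (m - l) γ_k⁻¹`,
where `P_λ(l) = e^{-λ} λ^l / l!` is the Poisson pmf. -/
theorem expected_pressure_erlang_residual
    (m : ℕ) (hm : 1 ≤ m) (γk rk ij : ℝ) (hγ : 0 < γk) (h : ij < rk) :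
    ∫ x, (if rk - x < ij then ij - (rk - x) else 0) ∂(gammaMeasure m γk)
      = ∑ l ∈ Finset.range m,
          (exp (-(γk * (rk - ij))) * (γk * (rk - ij)) ^ l / (Nat.factorial l))
            * (((m : ℝ) - l) * γk⁻¹) := by
  set c : ℝ := rk - ij with hcdef
  have hc : 0 < c := by simp [hcdef]; linarith
  have hma : (0:ℝ) < (m:ℝ) := by exact_mod_cast hm
  set g : ℝ → ℝ := fun x => if rk - x < ij then ij - (rk - x) else 0 with hg
  set C : ℝ := γk ^ m / (Nat.factorial (m-1)) with hC
  set f : ℝ → ℝ := fun x => C * ((x - c) * x ^ (m-1) * exp (-(γk * x))) with hf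
  -- step 1: withDensity
  have step1 : ∫ x, g x ∂(gammaMeasure m γk) = ∫ x, gammaPDFReal m γk x * g x := by
    rw [gammaMeasure,
      show gammaPDF (m:ℝ) γk = fun x => ((gammaPDFReal m γk x).toNNReal : ENNReal) from rfl,
      integral_withDensity_eq_integral_smul ((measurable_gammaPDFReal _ _).real_toNNReal) g]
    refine integral_congr_ae (Filter.Eventually.of_forall fun x => ?_)
    show (gammaPDFReal m γk x).toNNReal • g x = gammaPDFReal (m:ℝ) γk x * g x
    rw [NNReal.smul_def, Real.coe_toNNReal _ (gammaPDFReal_nonneg hma hγ x), smul_eq_mul]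
  -- step 2: restrict to Ioi c
  have step2 : ∫ x, gammaPDFReal m γk x * g x = ∫ x in Ioi c, gammaPDFReal m γk x * g x := by
    refine (setIntegral_eq_integral_of_forall_compl_eq_zero fun x hx => ?_).symm
    have hx' : x ≤ c := by simpa using hx
    have hx'' : x ≤ rk - ij := hx'.trans_eq hcdef
    have hni : ¬ (rk - x < ij) := by push_neg; linarith
    show gammaPDFReal (m:ℝ) γk x * g x = 0
    rw [hg]
    simp only [if_neg hni, mul_zero]
  -- step 3: rewrite integrand on Ioi c
  have step3 : ∫ x in Ioi c, gammaPDFReal m γk x * g x = ∫ x in Ioi c, f x := by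
    refine setIntegral_congr_fun measurableSet_Ioi fun x hx => ?_
    have hx0 : (0:ℝ) < x := hc.trans hx
    have hcx : rk - ij < x := by rw [← hcdef]; exact hx
    have hcond : rk - x < ij := by linarith
    have hmm : ((m:ℝ)) = ((m-1:ℕ):ℝ) + 1 := by
      have h1 := Nat.succ_pred_eq_of_pos hm
      conv_lhs => rw [← h1]
      push_cast [Nat.pred_eq_sub_one]
      ring
    show gammaPDFReal (m:ℝ) γk x * (if rk - x < ij then ij - (rk - x) else 0)
        = C * ((x - c) * x ^ (m-1) * exp (-(γk * x)))
    have hxc : ij - (rk - x) = x - c := by rw [hcdef]; ring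
    rw [if_pos hcond, hxc, gammaPDFReal, if_pos hx0.le, hC]
    rw [show γk ^ ((m:ℕ):ℝ) = γk ^ m from rpow_natCast γk m,
        show x ^ (((m:ℕ):ℝ) - 1) = x ^ (m-1) by
          rw [show (((m:ℕ):ℝ)) - 1 = ((m-1:ℕ):ℝ) by rw [hmm]; ring, rpow_natCast],
        show Real.Gamma (m:ℝ) = (Nat.factorial (m-1) : ℝ) by
          rw [hmm, Real.Gamma_nat_eq_factorial]]
    ring
  -- step 4: translate
  have step4 : ∫ x in Ioi c, f x = ∫ t in Ioi (0:ℝ), f (t + c) := by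
    have htrans := (measurePreserving_add_right volume c).setIntegral_preimage_emb
      (measurableEmbedding_addRight c) f (Ioi c)
    rw [preimage_add_const_Ioi, sub_self] at htrans
    exact htrans.symm
  -- step 5: expand and integrate
  have expand : ∀ t ∈ Ioi (0:ℝ), f (t + c)
      = ∑ j ∈ Finset.range m, (C * c ^ (m-1-j) * ((m-1).choose j) * exp (-(γk * c)))
          * (t ^ (j+1) * exp (-(γk * t))) := by
    intro t _
    show C * ((t + c - c) * (t + c) ^ (m-1) * exp (-(γk * (t + c)))) = _
    rw [add_sub_cancel_right, add_pow,
        show m - 1 + 1 = m from Nat.succ_pred_eq_of_pos hm,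
        show -(γk * (t + c)) = -(γk * t) + -(γk * c) by ring, exp_add]
    simp only [Finset.sum_mul, Finset.mul_sum]
    refine Finset.sum_congr rfl fun j _ => ?_
    ring
  have step5 : ∫ t in Ioi (0:ℝ), f (t + c)
      = ∑ j ∈ Finset.range m, (C * c ^ (m-1-j) * ((m-1).choose j) * exp (-(γk * c)))
          * ((Nat.factorial (j+1) : ℝ) / γk ^ (j+2)) := by
    rw [setIntegral_congr_fun measurableSet_Ioi expand,
      integral_finset_sum _ (fun j _ => ((integ_aux (j+1) hγ).const_mul _))]
    refine Finset.sum_congr rfl fun j _ => ?_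
    rw [integral_const_mul, moment_aux (j+1) hγ]
  -- step 6: algebra
  rw [show (∫ x, (if rk - x < ij then ij - (rk - x) else 0) ∂(gammaMeasure m γk))
        = ∫ x, g x ∂(gammaMeasure m γk) from rfl,
      step1, step2, step3, step4, step5]
  rw [← Finset.sum_range_reflect (fun l => (exp (-(γk * c)) * (γk * c) ^ l / (Nat.factorial l))
        * (((m : ℝ) - l) * γk⁻¹)) m]
  refine Finset.sum_congr rfl fun j hj => ?_
  have hjm : j < m := Finset.mem_range.mp hj
  have hj1 : j + 1 ≤ m := hjm
  have hsum : m - 1 - j + (j + 1) = m := by omega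
  have hcast : ((m - 1 - j : ℕ) : ℝ) = (m:ℝ) - 1 - j := by
    have : ((m - 1 - j : ℕ) : ℝ) + (j + 1) = m := by exact_mod_cast congrArg Nat.cast hsum
    linarith
  have hchoose : ((m-1).choose j : ℝ) * (Nat.factorial j) * (Nat.factorial (m-1-j))
      = (Nat.factorial (m-1) : ℝ) := by
    exact_mod_cast congrArg Nat.cast (Nat.choose_mul_factorial_mul_factorial (by omega : j ≤ m-1))
  rw [hC, hcast]
  have hfac1 : (Nat.factorial (j+1) : ℝ) = (j+1) * Nat.factorial j := by
    push_cast [Nat.factorial_succ]; ring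
  have hγm : γk ^ m = γk ^ (m-1-j) * γk ^ (j+1) := by rw [← pow_add, hsum]
  rw [hfac1, hγm, mul_pow, show (m:ℝ) - ((m:ℝ) - 1 - j) = (j:ℝ)+1 by ring]
  have h1 : (Nat.factorial j : ℝ) ≠ 0 := Nat.cast_ne_zero.mpr (Nat.factorial_ne_zero j)
  have h2 : (Nat.factorial (m-1) : ℝ) ≠ 0 := Nat.cast_ne_zero.mpr (Nat.factorial_ne_zero _)
  have h3 : (Nat.factorial (m-1-j) : ℝ) ≠ 0 := Nat.cast_ne_zero.mpr (Nat.factorial_ne_zero _)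
  field_simp
  rw [pow_succ, pow_succ]
  linear_combination (γk ^ j * γk * γk) * hchoose
end
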